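/- arXiv:1803.06360 — 5 statements merged into one kernel-verified Lean document; each statement's English description precedes it below -/
import Mathlib

section
/- (Derivative of the metric tensor, Claim 1) Let ρ(t)=ρ+tσ₁ with ρ strictly positive in the probability simplex and σ₁ a zero-sum vector, and g(μ)=L(μ)^†+u₀u₀ᵀ, where L is linear in its argument. Then for t near 0, d/dt g(ρ+tσ₁) = −g(ρ+tσ₁) L(σ₁) g(ρ+tσ₁). Consequently, for zero-sum vectors σ₂,σ₃: d/dt|_{t=0} σ₂ᵀ L(ρ+tσ₁)^† σ₃ = −σ₂ᵀ L(ρ)^† L(σ₁) L(ρ)^† σ₃. -/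
open Matrix

attribute [local instance] Matrix.normedAddCommGroup Matrix.normedSpace

/-- Discrete gradient matrix `D ∈ ℝ^{|E|×n}` with entries `±√ω_{ij}`. -/
noncomputable def gradMat {n : ℕ} {E : Type} (sE tE : E → Fin n) (w : E → ℝ) :
    Matrix E (Fin n) ℝ :=
  fun e k => if k = sE e then Real.sqrt (w e) else if k = tE e then -Real.sqrt (w e) else 0

/-- Weighted graph Laplacian `L(a) = Dᵀ Θ(a) D` with `Θ(a)` diagonal with entries
`(a_i + a_j)/2` on edges. -/
noncomputable def Lw {n : ℕ} {E : Type} [Fintype E] [DecidableEq E] (sE tE : E → Fin n) (w : E → ℝ)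
    (a : Fin n → ℝ) : Matrix (Fin n) (Fin n) ℝ :=
  (gradMat sE tE w)ᵀ * Matrix.diagonal (fun e => (a (sE e) + a (tE e)) / 2) * gradMat sE tE w

/-- `B` is the Moore–Penrose pseudoinverse of `A` (the four Penrose conditions). -/
def IsPInv {n : ℕ} (A B : Matrix (Fin n) (Fin n) ℝ) : Prop :=
  A * B * A = A ∧ B * A * B = B ∧ (A * B)ᵀ = A * B ∧ (B * A)ᵀ = B * A

/-- Vertex-wise circle product of the gradient fields of two potentials:
`(∇_GΦ ∘ ∇_GΨ)_i = (1/2)·Σ_{j ∈ N(i)} ω_{ij}(Φ_i − Φ_j)(Ψ_i − Ψ_j)`. -/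
noncomputable def circ {n : ℕ} {E : Type} [Fintype E] (sE tE : E → Fin n) (w : E → ℝ)
    (Φ Ψ : Fin n → ℝ) : Fin n → ℝ :=
  fun i => (1 / 2) *
    ∑ e : E, (if sE e = i ∨ tE e = i then
      w e * (Φ (sE e) - Φ (tE e)) * (Ψ (sE e) - Ψ (tE e)) else 0)

/-- The normalized all-ones vector `u₀ = (1/√n)(1,…,1)ᵀ`. -/
noncomputable def onesVec (n : ℕ) : Fin n → ℝ := fun _ => 1 / Real.sqrt n


/-! Since `L` is linear, `N t = L(ρ + tσ₁) + u₀u₀ᵀ` is affine in `t`, so the resolvent identity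
`G s - G t = G s (N t - N s) G t = (t - s) • G s L(σ₁) G t` computes every difference quotient of
`G` exactly; continuity of matrix inversion then yields `G' = -G L(σ₁) G`. At `t = 0` we have
`G 0 = L(ρ)^† + u₀u₀ᵀ`, and the rank-one term `u₀u₀ᵀ` is killed by zero-sum vectors on either side. -/

open Filter Topology

theorem sub_eq_mul_sub_mul_of_mul_eq_one {R : Type*} [Ring R] {a b x y : R}
    (ha : a * x = 1) (hb : y * b = 1) : a - b = a * (y - x) * b := by
  calc a - b = a * (y * b) - a * x * b := by rw [ha, hb, mul_one, one_mul]
    _ = a * (y - x) * b := by noncomm_ring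

theorem hasDerivAt_of_slope_eventuallyEq {F : Type*} [NormedAddCommGroup F] [NormedSpace ℝ F]
    {f g : ℝ → F} {t : ℝ} (hslope : slope f t =ᶠ[𝓝[≠] t] g) (hg : ContinuousAt g t) :
    HasDerivAt f (g t) t :=
  hasDerivAt_iff_tendsto_slope.mpr ((hg.tendsto.mono_left nhdsWithin_le_nhds).congr' hslope.symm)

theorem dotProduct_add_mul_mul_add_mulVec {ι R : Type*} [Fintype ι] [CommSemiring R]
    {P : Matrix ι ι R} {x y : ι → R} (hx : x ᵥ* P = 0) (hy : P *ᵥ y = 0) (A B : Matrix ι ι R) :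
    x ⬝ᵥ ((A + P) * B * (A + P)) *ᵥ y = x ⬝ᵥ (A * B * A) *ᵥ y := by
  have hright : (A + P) *ᵥ y = A *ᵥ y := by rw [add_mulVec, hy, add_zero]
  have hleft : x ᵥ* (A + P) = x ᵥ* A := by rw [vecMul_add, hx, add_zero]
  simp only [← mulVec_mulVec, hright, dotProduct_mulVec x (A + P), hleft, dotProduct_mulVec x A]

theorem HasDerivAt.dotProduct_mulVec {ι : Type*} [Fintype ι] {G : ℝ → Matrix ι ι ℝ}
    {G' : Matrix ι ι ℝ} {t : ℝ} (hG : HasDerivAt G G' t) (x y : ι → ℝ) :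
    HasDerivAt (fun s => x ⬝ᵥ G s *ᵥ y) (x ⬝ᵥ G' *ᵥ y) t :=
  let φ : Matrix ι ι ℝ →ₗ[ℝ] ℝ :=
    { toFun := fun M => x ⬝ᵥ M *ᵥ y
      map_add' := fun M N => by simp only [add_mulVec, dotProduct_add]
      map_smul' := fun c M => by simp only [smul_mulVec, dotProduct_smul, RingHom.id_apply] }
  (LinearMap.toContinuousLinearMap φ).hasFDerivAt.comp_hasDerivAt t hG

section MatrixCalculus

variable {ι : Type*} [Fintype ι] [DecidableEq ι]

theorem continuousAt_of_mul_eq_one {N G : ℝ → Matrix ι ι ℝ} {t : ℝ} (hN : ContinuousAt N t)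
    (hG : ∀ᶠ s in 𝓝 t, G s * N s = 1) : ContinuousAt G t := by
  have hdet : IsUnit (N t).det := isUnit_det_of_left_inverse hG.self_of_nhds
  have hinv : ContinuousAt Inv.inv (N t) :=
    continuousAt_matrix_inv _ (hdet.unit_spec ▸ NormedRing.inverse_continuousAt hdet.unit)
  exact (hinv.comp hN).congr (hG.mono fun s hs => inv_eq_left_inv hs)

theorem hasDerivAt_of_mul_add_smul_eq_one {A B : Matrix ι ι ℝ} {G : ℝ → Matrix ι ι ℝ} {t : ℝ}
    (hG : ∀ᶠ s in 𝓝 t, G s * (A + s • B) = 1) : HasDerivAt G (-(G t * B * G t)) t := by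
  have hright : (A + t • B) * G t = 1 := mul_eq_one_comm.mp hG.self_of_nhds
  have hcont : ContinuousAt G t := continuousAt_of_mul_eq_one (by fun_prop) hG
  refine hasDerivAt_of_slope_eventuallyEq (g := fun s => -(G s * B * G t)) ?_
    ((hcont.mul continuousAt_const).mul continuousAt_const).neg
  filter_upwards [nhdsWithin_le_nhds hG, self_mem_nhdsWithin] with s hs hst
  have hsub : G s - G t = (t - s) • (G s * B * G t) := by
    rw [sub_eq_mul_sub_mul_of_mul_eq_one hs hright, add_sub_add_left_eq_sub, ← sub_smul,
      Matrix.mul_smul, Matrix.smul_mul]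
  rw [slope_def_module, hsub, smul_smul, ← neg_sub s t, mul_neg,
    inv_mul_cancel₀ (sub_ne_zero.mpr hst), neg_one_smul]

end MatrixCalculus

section Laplacian

variable {n : ℕ} {E : Type} [Fintype E] [DecidableEq E] (sE tE : E → Fin n) (w : E → ℝ)

theorem Lw_add (a b : Fin n → ℝ) : Lw sE tE w (a + b) = Lw sE tE w a + Lw sE tE w b := by
  have : diagonal (fun e => ((a + b) (sE e) + (a + b) (tE e)) / 2) =
      diagonal (fun e => (a (sE e) + a (tE e)) / 2) +
        diagonal (fun e => (b (sE e) + b (tE e)) / 2) := by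
    rw [diagonal_add]; congr 1; ext e; simp only [Pi.add_apply]; ring
  simp only [Lw, this, Matrix.mul_add, Matrix.add_mul]

theorem Lw_smul (c : ℝ) (a : Fin n → ℝ) : Lw sE tE w (c • a) = c • Lw sE tE w a := by
  have : diagonal (fun e => ((c • a) (sE e) + (c • a) (tE e)) / 2) =
      c • diagonal (fun e => (a (sE e) + a (tE e)) / 2) := by
    rw [← diagonal_smul]; congr 1; ext e; simp only [Pi.smul_apply, smul_eq_mul]; ring
  simp only [Lw, this, Matrix.mul_smul, Matrix.smul_mul]

end Laplacian

theorem onesVec_dotProduct (n : ℕ) (σ : Fin n → ℝ) :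
    onesVec n ⬝ᵥ σ = (∑ i, σ i) / Real.sqrt n := by
  simp only [onesVec, dotProduct, one_div, inv_mul_eq_div, Finset.sum_div]

theorem vecMulVec_onesVec_mulVec {n : ℕ} {σ : Fin n → ℝ} (hσ : ∑ i, σ i = 0) :
    vecMulVec (onesVec n) (onesVec n) *ᵥ σ = 0 := by
  rw [vecMulVec_mulVec, onesVec_dotProduct, hσ, zero_div, MulOpposite.op_zero, zero_smul]

theorem vecMul_vecMulVec_onesVec {n : ℕ} {σ : Fin n → ℝ} (hσ : ∑ i, σ i = 0) :
    σ ᵥ* vecMulVec (onesVec n) (onesVec n) = 0 := by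
  rw [vecMul_vecMulVec, dotProduct_comm, onesVec_dotProduct, hσ, zero_div, zero_smul]

theorem metric_tensor_derivative_general
    {n : ℕ} {E : Type} [Fintype E] [DecidableEq E]
    (sE tE : E → Fin n) (w : E → ℝ)
    (ρ : Fin n → ℝ)
    (σ₁ σ₂ σ₃ : Fin n → ℝ)
    (h2 : ∑ i, σ₂ i = 0) (h3 : ∑ i, σ₃ i = 0)
    (Ldag : Matrix (Fin n) (Fin n) ℝ)
    (G : ℝ → Matrix (Fin n) (Fin n) ℝ) (ε : ℝ) (hε : 0 < ε)
    (hG : ∀ t : ℝ, |t| < ε →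
      G t * (Lw sE tE w (ρ + t • σ₁) + vecMulVec (onesVec n) (onesVec n)) = 1 ∧
      (Lw sE tE w (ρ + t • σ₁) + vecMulVec (onesVec n) (onesVec n)) * G t = 1)
    (hG0 : G 0 = Ldag + vecMulVec (onesVec n) (onesVec n)) :
    (∀ t : ℝ, |t| < ε → HasDerivAt G (-(G t * Lw sE tE w σ₁ * G t)) t) ∧
    HasDerivAt (fun t => σ₂ ⬝ᵥ (G t *ᵥ σ₃))
      (-(σ₂ ⬝ᵥ ((Ldag * Lw sE tE w σ₁ * Ldag) *ᵥ σ₃))) 0 := by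
  have hderiv : ∀ t : ℝ, |t| < ε → HasDerivAt G (-(G t * Lw sE tE w σ₁ * G t)) t := by
    intro t ht
    apply hasDerivAt_of_mul_add_smul_eq_one
      (A := Lw sE tE w ρ + vecMulVec (onesVec n) (onesVec n))
    filter_upwards [(isOpen_lt continuous_abs continuous_const).mem_nhds ht] with s hs
    rw [add_right_comm, ← Lw_smul, ← Lw_add]
    exact (hG s hs).1
  refine ⟨hderiv, ?_⟩
  have hderiv0 := (hderiv 0 (by rwa [abs_zero])).dotProduct_mulVec σ₂ σ₃
  rwa [hG0, neg_mulVec, dotProduct_neg, dotProduct_add_mul_mul_add_mulVec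
    (vecMul_vecMulVec_onesVec h2) (vecMulVec_onesVec_mulVec h3)] at hderiv0

/-- Claim 1, derivative of the metric tensor: if `G t` is the inverse of
`L(ρ+tσ₁) + u₀u₀ᵀ` for `t` near `0` (so `G t = g(ρ+tσ₁)`), then
`d/dt G = −G L(σ₁) G`, and consequently for zero-sum `σ₂, σ₃`,
`d/dt|₀ σ₂ᵀ L(ρ+tσ₁)^† σ₃ = −σ₂ᵀ L(ρ)^† L(σ₁) L(ρ)^† σ₃`. -/
theorem metric_tensor_derivative
    {n : ℕ} {E : Type} [Fintype E] [DecidableEq E]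
    (sE tE : E → Fin n) (w : E → ℝ)
    (hw : ∀ e, 0 < w e)
    (hconn : ∀ Φ : Fin n → ℝ, (∀ e, Φ (sE e) = Φ (tE e)) → ∀ i j, Φ i = Φ j)
    (ρ : Fin n → ℝ) (hρ : ∀ i, 0 < ρ i) (hsum : ∑ i, ρ i = 1)
    (σ₁ σ₂ σ₃ : Fin n → ℝ)
    (h1 : ∑ i, σ₁ i = 0) (h2 : ∑ i, σ₂ i = 0) (h3 : ∑ i, σ₃ i = 0)
    (Ldag : Matrix (Fin n) (Fin n) ℝ) (hpinv : IsPInv (Lw sE tE w ρ) Ldag)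
    (hker : ∀ Φ : Fin n → ℝ, Lw sE tE w ρ *ᵥ Φ = 0 ↔ ∃ c : ℝ, ∀ i, Φ i = c)
    (G : ℝ → Matrix (Fin n) (Fin n) ℝ) (ε : ℝ) (hε : 0 < ε)
    (hG : ∀ t : ℝ, |t| < ε →
      G t * (Lw sE tE w (ρ + t • σ₁) + vecMulVec (onesVec n) (onesVec n)) = 1 ∧
      (Lw sE tE w (ρ + t • σ₁) + vecMulVec (onesVec n) (onesVec n)) * G t = 1)
    (hG0 : G 0 = Ldag + vecMulVec (onesVec n) (onesVec n)) :
    (∀ t : ℝ, |t| < ε → HasDerivAt G (-(G t * Lw sE tE w σ₁ * G t)) t) ∧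
    HasDerivAt (fun t => σ₂ ⬝ᵥ (G t *ᵥ σ₃))
      (-(σ₂ ⬝ᵥ ((Ldag * Lw sE tE w σ₁ * Ldag) *ᵥ σ₃))) 0 :=
  metric_tensor_derivative_general sE tE w ρ σ₁ σ₂ σ₃ h2 h3 Ldag G ε hε hG hG0
end

section
/- (Claim 2: symmetry identity for the connection) Let ρ be strictly positive in the probability simplex and σ₁,σ₂,σ₃ zero-sum vectors. Writing Φ_a=L(ρ)^†σ_a and defining the vertex function (∇_GΦ₁∘∇_GΦ₂)_i = (1/2)Σ_{j∈N(i)} ω_{ij}(Φ₁(i)−Φ₁(j))(Φ₂(i)−Φ₂(j)), one has σ₁ᵀ L(ρ)^† L(σ₃) L(ρ)^† σ₂ = σ₃ᵀ L(ρ)^† L(ρ) (∇_GL(ρ)^†σ₁ ∘ ∇_GL(ρ)^†σ₂). -/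
open Matrix

/-- Entry of the discrete gradient applied to a potential. -/
lemma gradMat_mulVec {n : ℕ} {E : Type} [Fintype E] (sE tE : E → Fin n) (w : E → ℝ)
    (Φ : Fin n → ℝ) (e : E) :
    (gradMat sE tE w *ᵥ Φ) e =
      if sE e = tE e then Real.sqrt (w e) * Φ (sE e)
      else Real.sqrt (w e) * (Φ (sE e) - Φ (tE e)) := by
  classical
  simp only [mulVec, dotProduct, gradMat]
  by_cases h : sE e = tE e
  · rw [if_pos h]
    have : ∀ k : Fin n,
        (if k = sE e then Real.sqrt (w e) else if k = tE e then -Real.sqrt (w e) else 0) * Φ k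
          = (if k = sE e then Real.sqrt (w e) * Φ k else 0) := by
      intro k
      by_cases hk : k = sE e
      · simp [hk]
      · have : k ≠ tE e := by rw [← h]; exact hk
        simp [hk, this]
    rw [Finset.sum_congr rfl (fun k _ => this k),
      Finset.sum_ite_eq' Finset.univ (sE e) (fun k => Real.sqrt (w e) * Φ k)]
    simp
  · rw [if_neg h]
    have : ∀ k : Fin n,
        (if k = sE e then Real.sqrt (w e) else if k = tE e then -Real.sqrt (w e) else 0) * Φ k
          = (if k = sE e then Real.sqrt (w e) * Φ k else 0)
            + (if k = tE e then -(Real.sqrt (w e) * Φ k) else 0) := by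
      intro k
      by_cases hks : k = sE e
      · have hkt : k ≠ tE e := fun hh => h (hks.symm.trans hh)
        rw [if_pos hks, if_pos hks, if_neg hkt, add_zero]
      · by_cases hkt : k = tE e
        · rw [if_neg hks, if_pos hkt, if_neg hks, if_pos hkt, zero_add, neg_mul]
        · rw [if_neg hks, if_neg hkt, if_neg hks, if_neg hkt, zero_mul, add_zero]
    rw [Finset.sum_congr rfl (fun k _ => this k), Finset.sum_add_distrib,
      Finset.sum_ite_eq' Finset.univ (sE e) (fun k => Real.sqrt (w e) * Φ k),
      Finset.sum_ite_eq' Finset.univ (tE e) (fun k => -(Real.sqrt (w e) * Φ k))]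
    simp only [Finset.mem_univ, if_pos]
    ring

/-- Quadratic form of the Laplacian. -/
lemma quadform {n : ℕ} {E : Type} [Fintype E] [DecidableEq E] (sE tE : E → Fin n) (w : E → ℝ)
    (a Φ Ψ : Fin n → ℝ) :
    Φ ⬝ᵥ (Lw sE tE w a *ᵥ Ψ) =
      ∑ e : E, ((a (sE e) + a (tE e)) / 2) * ((gradMat sE tE w *ᵥ Φ) e)
        * ((gradMat sE tE w *ᵥ Ψ) e) := by
  classical
  rw [Lw, ← mulVec_mulVec, ← mulVec_mulVec, dotProduct_mulVec, vecMul_transpose]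
  simp only [dotProduct, mulVec_diagonal]
  apply Finset.sum_congr rfl
  intro e _
  ring

/-- There are no self-loops (otherwise constants would not be in the kernel). -/
lemma no_self_loop {n : ℕ} {E : Type} [Fintype E] [DecidableEq E] (sE tE : E → Fin n)
    (w : E → ℝ) (hw : ∀ e, 0 < w e) (ρ : Fin n → ℝ) (hρ : ∀ i, 0 < ρ i)
    (hker : ∀ Φ : Fin n → ℝ, Lw sE tE w ρ *ᵥ Φ = 0 ↔ ∃ c : ℝ, ∀ i, Φ i = c)
    (e : E) : sE e ≠ tE e := by
  classical
  intro hloop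
  have hone : Lw sE tE w ρ *ᵥ (fun _ => (1 : ℝ)) = 0 :=
    (hker _).mpr ⟨1, fun _ => rfl⟩
  have hq : (fun _ => (1 : ℝ)) ⬝ᵥ (Lw sE tE w ρ *ᵥ (fun _ => (1 : ℝ))) = 0 := by
    rw [hone]; simp
  rw [quadform] at hq
  have hterm : ∀ f : E, 0 ≤ ((ρ (sE f) + ρ (tE f)) / 2) *
      ((gradMat sE tE w *ᵥ (fun _ => (1 : ℝ))) f) *
      ((gradMat sE tE w *ᵥ (fun _ => (1 : ℝ))) f) := by
    intro f
    rw [mul_assoc]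
    exact mul_nonneg (div_nonneg (by linarith [hρ (sE f), hρ (tE f)]) (by norm_num))
      (mul_self_nonneg _)
  have hzero := (Finset.sum_eq_zero_iff_of_nonneg (fun f _ => hterm f)).mp hq e
    (Finset.mem_univ e)
  rw [gradMat_mulVec, if_pos hloop] at hzero
  have hwpos : (0:ℝ) < Real.sqrt (w e) := Real.sqrt_pos.mpr (hw e)
  have hρpos : (0:ℝ) < (ρ (sE e) + ρ (tE e)) / 2 := by
    have := hρ (sE e); have := hρ (tE e); linarith
  rw [mul_one] at hzero
  have hpos : (0:ℝ) < ((ρ (sE e) + ρ (tE e)) / 2) * Real.sqrt (w e) * Real.sqrt (w e) :=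
    mul_pos (mul_pos hρpos hwpos) hwpos
  linarith

/-- The quadratic form of `L(a)` equals `a ⬝ circ Φ Ψ` when there are no self-loops. -/
lemma quadform_eq_circ {n : ℕ} {E : Type} [Fintype E] [DecidableEq E] (sE tE : E → Fin n)
    (w : E → ℝ) (hw : ∀ e, 0 ≤ w e) (hns : ∀ e, sE e ≠ tE e) (a Φ Ψ : Fin n → ℝ) :
    Φ ⬝ᵥ (Lw sE tE w a *ᵥ Ψ) = a ⬝ᵥ circ sE tE w Φ Ψ := by
  classical
  rw [quadform]
  have hrhs : a ⬝ᵥ circ sE tE w Φ Ψ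
      = ∑ e : E,
          (a (sE e) * ((1/2) * (w e * (Φ (sE e) - Φ (tE e)) * (Ψ (sE e) - Ψ (tE e))))
           + a (tE e) * ((1/2) * (w e * (Φ (sE e) - Φ (tE e)) * (Ψ (sE e) - Ψ (tE e))))) := by
    simp only [dotProduct, circ, Finset.mul_sum, mul_ite, mul_zero]
    rw [Finset.sum_comm]
    refine Finset.sum_congr rfl (fun e _ => ?_)
    have hsplit : ∀ i : Fin n,
        (if sE e = i ∨ tE e = i then
          a i * ((1/2) * (w e * (Φ (sE e) - Φ (tE e)) * (Ψ (sE e) - Ψ (tE e)))) else 0)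
        = (if sE e = i then
            a i * ((1/2) * (w e * (Φ (sE e) - Φ (tE e)) * (Ψ (sE e) - Ψ (tE e)))) else 0)
          + (if tE e = i then
            a i * ((1/2) * (w e * (Φ (sE e) - Φ (tE e)) * (Ψ (sE e) - Ψ (tE e)))) else 0) := by
      intro i
      by_cases h1 : sE e = i
      · have h2 : tE e ≠ i := by rw [← h1]; exact fun h => (hns e) h.symm
        simp [h1, h2]
      · by_cases h2 : tE e = i <;> simp [h1, h2]
    rw [Finset.sum_congr rfl (fun i _ => hsplit i), Finset.sum_add_distrib,
      Finset.sum_ite_eq Finset.univ (sE e)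
        (fun i => a i * ((1/2) * (w e * (Φ (sE e) - Φ (tE e)) * (Ψ (sE e) - Ψ (tE e))))),
      Finset.sum_ite_eq Finset.univ (tE e)
        (fun i => a i * ((1/2) * (w e * (Φ (sE e) - Φ (tE e)) * (Ψ (sE e) - Ψ (tE e)))))]
    simp
  rw [hrhs]
  refine Finset.sum_congr rfl (fun e _ => ?_)
  rw [gradMat_mulVec, gradMat_mulVec, if_neg (hns e), if_neg (hns e)]
  have hws : Real.sqrt (w e) * Real.sqrt (w e) = w e := Real.mul_self_sqrt (hw e)
  linear_combination ((a (sE e) + a (tE e)) / 2 * (Φ (sE e) - Φ (tE e)) *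
    (Ψ (sE e) - Ψ (tE e))) * hws

/-- Uniqueness of the Moore–Penrose pseudoinverse. -/
lemma pinv_unique {n : ℕ} {A B C : Matrix (Fin n) (Fin n) ℝ}
    (hB : IsPInv A B) (hC : IsPInv A C) : B = C := by
  obtain ⟨hB1, hB2, hB3, hB4⟩ := hB
  obtain ⟨hC1, hC2, hC3, hC4⟩ := hC
  have hBC : B = B * (A * C) := by
    calc B = B * A * B := hB2.symm
    _ = B * (A * B) := by rw [Matrix.mul_assoc]
    _ = B * (A * B)ᵀ := by rw [hB3]
    _ = B * (Bᵀ * Aᵀ) := by rw [Matrix.transpose_mul]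
    _ = B * (Bᵀ * (A * C * A)ᵀ) := by rw [hC1]
    _ = B * (Bᵀ * (Aᵀ * (A * C)ᵀ)) := by rw [Matrix.transpose_mul (A * C) A]
    _ = B * (Bᵀ * (Aᵀ * (A * C))) := by rw [hC3]
    _ = B * ((Bᵀ * Aᵀ) * (A * C)) := by rw [Matrix.mul_assoc]
    _ = B * ((A * B)ᵀ * (A * C)) := by rw [Matrix.transpose_mul]
    _ = B * ((A * B) * (A * C)) := by rw [hB3]
    _ = (B * A * B) * (A * C) := by noncomm_ring
    _ = B * (A * C) := by rw [hB2]
  have hAt : (B * A) * Aᵀ = Aᵀ := by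
    calc (B * A) * Aᵀ = (B * A)ᵀ * Aᵀ := by rw [hB4]
    _ = (A * (B * A))ᵀ := by rw [Matrix.transpose_mul A (B * A)]
    _ = (A * B * A)ᵀ := by rw [Matrix.mul_assoc]
    _ = Aᵀ := by rw [hB1]
  have hCC : C = B * (A * C) := by
    calc C = C * A * C := hC2.symm
    _ = (C * A)ᵀ * C := by rw [hC4]
    _ = (Aᵀ * Cᵀ) * C := by rw [Matrix.transpose_mul]
    _ = (((B * A) * Aᵀ) * Cᵀ) * C := by rw [hAt]
    _ = ((B * A) * (Aᵀ * Cᵀ)) * C := by noncomm_ring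
    _ = ((B * A) * (C * A)ᵀ) * C := by rw [Matrix.transpose_mul]
    _ = ((B * A) * (C * A)) * C := by rw [hC4]
    _ = (B * A) * ((C * A) * C) := by rw [Matrix.mul_assoc]
    _ = (B * A) * (C * A * C) := by noncomm_ring
    _ = (B * A) * C := by rw [hC2]
    _ = B * (A * C) := by rw [Matrix.mul_assoc]
  rw [hBC, ← hCC]

/-- The pseudoinverse of a symmetric matrix has symmetric-transpose pseudoinverse. -/
lemma pinv_transpose {n : ℕ} {A B : Matrix (Fin n) (Fin n) ℝ} (hA : Aᵀ = A)
    (h : IsPInv A B) : IsPInv A Bᵀ := by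
  obtain ⟨h1, h2, h3, h4⟩ := h
  refine ⟨?_, ?_, ?_, ?_⟩
  · calc A * Bᵀ * A = A * (Bᵀ * A) := by rw [Matrix.mul_assoc]
    _ = Aᵀ * (Bᵀ * Aᵀ) := by rw [hA]
    _ = ((A * B) * A)ᵀ := by rw [Matrix.transpose_mul (A * B) A, Matrix.transpose_mul A B]
    _ = Aᵀ := by rw [h1]
    _ = A := hA
  · calc Bᵀ * A * Bᵀ = Bᵀ * (A * Bᵀ) := by rw [Matrix.mul_assoc]
    _ = Bᵀ * (Aᵀ * Bᵀ) := by rw [hA]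
    _ = ((B * A) * B)ᵀ := by rw [Matrix.transpose_mul (B * A) B, Matrix.transpose_mul B A]
    _ = Bᵀ := by rw [h2]
  · calc (A * Bᵀ)ᵀ = Bᵀᵀ * Aᵀ := by rw [Matrix.transpose_mul]
    _ = B * A := by rw [Matrix.transpose_transpose, hA]
    _ = (B * A)ᵀ := h4.symm
    _ = Aᵀ * Bᵀ := by rw [Matrix.transpose_mul]
    _ = A * Bᵀ := by rw [hA]
  · calc (Bᵀ * A)ᵀ = Aᵀ * Bᵀᵀ := by rw [Matrix.transpose_mul]
    _ = A * B := by rw [Matrix.transpose_transpose, hA]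
    _ = (A * B)ᵀ := h3.symm
    _ = Bᵀ * Aᵀ := by rw [Matrix.transpose_mul]
    _ = Bᵀ * A := by rw [hA]

/-- The Laplacian is symmetric. -/
lemma Lw_symm {n : ℕ} {E : Type} [Fintype E] [DecidableEq E] (sE tE : E → Fin n)
    (w : E → ℝ) (a : Fin n → ℝ) : (Lw sE tE w a)ᵀ = Lw sE tE w a := by
  simp [Lw, Matrix.transpose_mul, Matrix.diagonal_transpose, Matrix.transpose_transpose,
    Matrix.mul_assoc]

/-- Zero-sum vectors are fixed by the projection `B * A`. -/
lemma proj_fix {n : ℕ} (A B : Matrix (Fin n) (Fin n) ℝ) (hpinv : IsPInv A B)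
    (hker : ∀ Φ : Fin n → ℝ, A *ᵥ Φ = 0 ↔ ∃ c : ℝ, ∀ i, Φ i = c)
    (σ : Fin n → ℝ) (hσ : ∑ i, σ i = 0) : (B * A) *ᵥ σ = σ := by
  obtain ⟨h1, h2, h3, h4⟩ := hpinv
  set v : Fin n → ℝ := σ - (B * A) *ᵥ σ with hv
  have hAv : A *ᵥ v = 0 := by
    rw [hv, Matrix.mulVec_sub, Matrix.mulVec_mulVec, ← Matrix.mul_assoc, h1, sub_self]
  obtain ⟨c, hc⟩ := (hker v).mp hAv
  have hPP : (B * A) * (B * A) = B * A := by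
    have hr : (B * A) * (B * A) = (B * A * B) * A := by noncomm_ring
    rw [hr, h2]
  have hPv : (B * A) *ᵥ v = 0 := by
    rw [hv, Matrix.mulVec_sub, Matrix.mulVec_mulVec, hPP, sub_self]
  have hv1 : v ⬝ᵥ σ = 0 := by
    have : v ⬝ᵥ σ = c * ∑ i, σ i := by
      simp only [dotProduct, Finset.mul_sum]
      exact Finset.sum_congr rfl (fun i _ => by rw [hc i])
    rw [this, hσ, mul_zero]
  have hv2 : v ⬝ᵥ ((B * A) *ᵥ σ) = 0 := by
    rw [dotProduct_mulVec]
    have : v ᵥ* (B * A) = 0 := by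
      rw [← Matrix.mulVec_transpose, h4, hPv]
    rw [this, zero_dotProduct]
  have hvv : v ⬝ᵥ v = 0 := by
    have : v ⬝ᵥ v = v ⬝ᵥ σ - v ⬝ᵥ ((B * A) *ᵥ σ) := by
      rw [hv]
      rw [dotProduct_sub]
    rw [this, hv1, hv2, sub_zero]
  have hv0 : v = 0 := by
    funext i
    have hsum : ∑ j, v j * v j = 0 := hvv
    have := (Finset.sum_eq_zero_iff_of_nonneg
      (fun j (_ : j ∈ Finset.univ) => mul_self_nonneg (v j))).mp hsum i (Finset.mem_univ i)
    simpa using mul_self_eq_zero.mp this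
  have hfin : σ - (B * A) *ᵥ σ = 0 := hv ▸ hv0
  funext i
  have hh := congrFun hfin i
  simp only [Pi.sub_apply, Pi.zero_apply] at hh
  linarith

/-- Claim 2, symmetry identity for the connection:
`σ₁ᵀ L(ρ)^† L(σ₃) L(ρ)^† σ₂ = σ₃ᵀ L(ρ)^† L(ρ) (∇_GL(ρ)^†σ₁ ∘ ∇_GL(ρ)^†σ₂)`. -/
theorem connection_symmetry_identity
    {n : ℕ} {E : Type} [Fintype E] [DecidableEq E]
    (sE tE : E → Fin n) (w : E → ℝ)
    (hw : ∀ e, 0 < w e)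
    (hconn : ∀ Φ : Fin n → ℝ, (∀ e, Φ (sE e) = Φ (tE e)) → ∀ i j, Φ i = Φ j)
    (ρ : Fin n → ℝ) (hρ : ∀ i, 0 < ρ i) (hsum : ∑ i, ρ i = 1)
    (Ldag : Matrix (Fin n) (Fin n) ℝ) (hpinv : IsPInv (Lw sE tE w ρ) Ldag)
    (hker : ∀ Φ : Fin n → ℝ, Lw sE tE w ρ *ᵥ Φ = 0 ↔ ∃ c : ℝ, ∀ i, Φ i = c)
    (σ₁ σ₂ σ₃ : Fin n → ℝ)
    (h1 : ∑ i, σ₁ i = 0) (h2 : ∑ i, σ₂ i = 0) (h3 : ∑ i, σ₃ i = 0) :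
    σ₁ ⬝ᵥ ((Ldag * Lw sE tE w σ₃ * Ldag) *ᵥ σ₂) =
      σ₃ ⬝ᵥ ((Ldag * Lw sE tE w ρ) *ᵥ circ sE tE w (Ldag *ᵥ σ₁) (Ldag *ᵥ σ₂)) := by
  classical
  have hns : ∀ e, sE e ≠ tE e := no_self_loop sE tE w hw ρ hρ hker
  have hBsym : Ldagᵀ = Ldag :=
    pinv_unique (pinv_transpose (Lw_symm sE tE w ρ) hpinv) hpinv
  -- LHS
  have lhs_eq : σ₁ ⬝ᵥ ((Ldag * Lw sE tE w σ₃ * Ldag) *ᵥ σ₂)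
      = σ₃ ⬝ᵥ circ sE tE w (Ldag *ᵥ σ₁) (Ldag *ᵥ σ₂) := by
    rw [← Matrix.mulVec_mulVec, ← Matrix.mulVec_mulVec, dotProduct_mulVec,
      ← Matrix.mulVec_transpose, hBsym]
    exact quadform_eq_circ sE tE w (fun e => (hw e).le) hns σ₃ (Ldag *ᵥ σ₁) (Ldag *ᵥ σ₂)
  -- RHS
  have rhs_eq : σ₃ ⬝ᵥ ((Ldag * Lw sE tE w ρ) *ᵥ circ sE tE w (Ldag *ᵥ σ₁) (Ldag *ᵥ σ₂))
      = σ₃ ⬝ᵥ circ sE tE w (Ldag *ᵥ σ₁) (Ldag *ᵥ σ₂) := by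
    rw [dotProduct_mulVec, ← Matrix.mulVec_transpose, hpinv.2.2.2,
      proj_fix (Lw sE tE w ρ) Ldag hpinv hker σ₃ h3]
  rw [lhs_eq, rhs_eq]
end

section
/- (Dual form of the geodesic equation) Let ρ(t) be strictly positive in the probability simplex and Φ(t)∈ℝⁿ satisfy ρ̇ = L(ρ)Φ. Then ρ(t) solves the Wasserstein geodesic equation ρ̈ − L(ρ̇)L(ρ)^†ρ̇ + (1/2)L(ρ)(∇_GL(ρ)^†ρ̇ ∘ ∇_GL(ρ)^†ρ̇) = 0 if and only if (ρ,Φ) solve the discrete Hamiltonian system ρ̇ + div_G(ρ∇_GΦ)=0 and Φ̇ + (1/2)∇_GΦ∘∇_GΦ = c(t)·(1,…,1)ᵀ for some scalar function c(t). -/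
open Matrix

/-! Since `L(ρ)` kills exactly the constants and `L(ρ)†` satisfies `L L† L = L`, the potential
`L(ρ)†ρ̇` differs from `Φ` by a constant. `L(ρ̇)` also kills constants, being the derivative of
`t ↦ L(ρ t)`, and the circle product only sees differences along edges. Differentiating
`ρ̇ = L(ρ)Φ` therefore turns the geodesic operator into `L(ρ)(Φ̇ + ½ ∇Φ∘∇Φ)`, which vanishes
exactly when `Φ̇ + ½ ∇Φ∘∇Φ` is constant. -/

theorem HasDerivAt.const_mulVec {m k : Type} [Fintype m] [Fintype k] (M : Matrix m k ℝ)
    {f : ℝ → k → ℝ} {f' : k → ℝ} {t : ℝ} (hf : HasDerivAt f f' t) :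
    HasDerivAt (fun s => M *ᵥ f s) (M *ᵥ f') t :=
  (LinearMap.toContinuousLinearMap M.mulVecLin).hasFDerivAt.comp_hasDerivAt t hf

theorem circ_add_const {n : ℕ} {E : Type} [Fintype E] (sE tE : E → Fin n) (w : E → ℝ)
    (Φ Ψ : Fin n → ℝ) (c d : ℝ) :
    circ sE tE w (Φ + fun _ => c) (Ψ + fun _ => d) = circ sE tE w Φ Ψ := by
  unfold circ
  simp only [Pi.add_apply, add_sub_add_right_eq_sub]

section

variable {n : ℕ} {E : Type} [Fintype E] [DecidableEq E] (sE tE : E → Fin n) (w : E → ℝ)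

theorem Lw_mulVec (a v : Fin n → ℝ) :
    Lw sE tE w a *ᵥ v = (gradMat sE tE w)ᵀ *ᵥ
      ((fun e => (a (sE e) + a (tE e)) / 2) * (gradMat sE tE w *ᵥ v)) := by
  rw [Lw, ← mulVec_mulVec, ← mulVec_mulVec]
  congr 1
  ext e
  exact mulVec_diagonal _ _ e

theorem hasDerivAt_Lw_mulVec {ρ Φ : ℝ → Fin n → ℝ} {ρ' Φ' : Fin n → ℝ} {t : ℝ}
    (hρ : HasDerivAt ρ ρ' t) (hΦ : HasDerivAt Φ Φ' t) :
    HasDerivAt (fun s => Lw sE tE w (ρ s) *ᵥ Φ s)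
      (Lw sE tE w ρ' *ᵥ Φ t + Lw sE tE w (ρ t) *ᵥ Φ') t := by
  have hmean : HasDerivAt (fun s e => (ρ s (sE e) + ρ s (tE e)) / 2)
      (fun e => (ρ' (sE e) + ρ' (tE e)) / 2) t :=
    hasDerivAt_pi.2 fun e =>
      ((hasDerivAt_pi.1 hρ (sE e)).add (hasDerivAt_pi.1 hρ (tE e))).div_const 2
  simp only [Lw_mulVec, ← mulVec_add]
  exact (hmean.mul (hΦ.const_mulVec _)).const_mulVec _

theorem Lw_mulVec_eq_zero_of_hasDerivAt {ρ : ℝ → Fin n → ℝ} {ρ' : Fin n → ℝ} {t : ℝ}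
    (hρ : HasDerivAt ρ ρ' t) {v : Fin n → ℝ} (hv : ∀ s, Lw sE tE w (ρ s) *ᵥ v = 0) :
    Lw sE tE w ρ' *ᵥ v = 0 := by
  have h := hasDerivAt_Lw_mulVec sE tE w hρ (hasDerivAt_const t v)
  simp only [hv, mulVec_zero, add_zero] at h
  exact h.unique (hasDerivAt_const t 0)

end

theorem geodesic_equation_dual_general
    {n : ℕ} {E : Type} [Fintype E] [DecidableEq E]
    (sE tE : E → Fin n) (w : E → ℝ)
    (ρc dρ ddρ Φ dΦ : ℝ → Fin n → ℝ)
    (hd1 : ∀ t, HasDerivAt ρc (dρ t) t) (hd2 : ∀ t, HasDerivAt dρ (ddρ t) t)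
    (hd3 : ∀ t, HasDerivAt Φ (dΦ t) t)
    (hΦ : ∀ t, dρ t = Lw sE tE w (ρc t) *ᵥ Φ t)
    (Ldag : ℝ → Matrix (Fin n) (Fin n) ℝ)
    (hpinv : ∀ t, IsPInv (Lw sE tE w (ρc t)) (Ldag t))
    (hker : ∀ t, ∀ Ψ : Fin n → ℝ,
      Lw sE tE w (ρc t) *ᵥ Ψ = 0 ↔ ∃ c : ℝ, ∀ i, Ψ i = c) :
    (∀ t : ℝ,
      ddρ t - Lw sE tE w (dρ t) *ᵥ (Ldag t *ᵥ dρ t) +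
        (1/2 : ℝ) • (Lw sE tE w (ρc t) *ᵥ
          circ sE tE w (Ldag t *ᵥ dρ t) (Ldag t *ᵥ dρ t)) = 0) ↔
    ((∀ t : ℝ, dρ t + -(Lw sE tE w (ρc t) *ᵥ Φ t) = 0) ∧
      ∃ c : ℝ → ℝ, ∀ t : ℝ, ∀ i : Fin n,
        dΦ t i + (1/2 : ℝ) * circ sE tE w (Φ t) (Φ t) i = c t) := by
  have hconst_ρ : ∀ t c, Lw sE tE w (ρc t) *ᵥ (fun _ => c) = 0 :=
    fun t c => (hker t _).2 ⟨c, fun _ => rfl⟩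
  have hconst_dρ : ∀ t c, Lw sE tE w (dρ t) *ᵥ (fun _ => c) = 0 :=
    fun t c => Lw_mulVec_eq_zero_of_hasDerivAt sE tE w (hd1 t) (hconst_ρ · c)
  have hddρ : ∀ t, ddρ t = Lw sE tE w (dρ t) *ᵥ Φ t + Lw sE tE w (ρc t) *ᵥ dΦ t := fun t =>
    (hd2 t).unique (by simpa only [← funext hΦ] using hasDerivAt_Lw_mulVec sE tE w (hd1 t) (hd3 t))
  have hpot : ∀ t, ∃ c, Ldag t *ᵥ dρ t = Φ t + fun _ => c := by
    intro t
    obtain ⟨c, hc⟩ := (hker t (Ldag t *ᵥ dρ t - Φ t)).1 (by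
      rw [mulVec_sub, hΦ t, mulVec_mulVec, mulVec_mulVec, (hpinv t).1, sub_self])
    exact ⟨c, funext fun i => by rw [Pi.add_apply, ← hc i, Pi.sub_apply, add_sub_cancel]⟩
  have hgeo : ∀ t, ddρ t - Lw sE tE w (dρ t) *ᵥ (Ldag t *ᵥ dρ t) +
      (1/2 : ℝ) • (Lw sE tE w (ρc t) *ᵥ circ sE tE w (Ldag t *ᵥ dρ t) (Ldag t *ᵥ dρ t)) =
      Lw sE tE w (ρc t) *ᵥ (dΦ t + (1/2 : ℝ) • circ sE tE w (Φ t) (Φ t)) := by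
    intro t
    obtain ⟨c, hc⟩ := hpot t
    rw [hc, circ_add_const, mulVec_add, hconst_dρ, add_zero, hddρ t, mulVec_add, mulVec_smul]
    abel
  have hflow : ∀ t, dρ t + -(Lw sE tE w (ρc t) *ᵥ Φ t) = 0 :=
    fun t => by rw [hΦ t, add_neg_cancel]
  simp only [hgeo, hker, Pi.add_apply, Pi.smul_apply, smul_eq_mul, Classical.skolem]
  exact (and_iff_right hflow).symm

/-- Dual form of the geodesic equation: with `ρ̇ = L(ρ)Φ`, the curve
solves the Wasserstein geodesic equation iff `(ρ,Φ)` solve the Hamiltonian system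
`ρ̇ + div_G(ρ∇_GΦ) = 0` and `Φ̇ + (1/2)∇_GΦ∘∇_GΦ = c(t)·𝟙` for some scalar `c(t)`. -/
theorem geodesic_equation_dual
    {n : ℕ} {E : Type} [Fintype E] [DecidableEq E]
    (sE tE : E → Fin n) (w : E → ℝ)
    (hw : ∀ e, 0 < w e)
    (hconn : ∀ Φ : Fin n → ℝ, (∀ e, Φ (sE e) = Φ (tE e)) → ∀ i j, Φ i = Φ j)
    (ρc dρ ddρ Φ dΦ : ℝ → Fin n → ℝ)
    (hpos : ∀ t i, 0 < ρc t i) (hsum : ∀ t, ∑ i, ρc t i = 1)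
    (hd1 : ∀ t, HasDerivAt ρc (dρ t) t) (hd2 : ∀ t, HasDerivAt dρ (ddρ t) t)
    (hd3 : ∀ t, HasDerivAt Φ (dΦ t) t)
    (hΦ : ∀ t, dρ t = Lw sE tE w (ρc t) *ᵥ Φ t)
    (Ldag : ℝ → Matrix (Fin n) (Fin n) ℝ)
    (hpinv : ∀ t, IsPInv (Lw sE tE w (ρc t)) (Ldag t))
    (hker : ∀ t, ∀ Ψ : Fin n → ℝ,
      Lw sE tE w (ρc t) *ᵥ Ψ = 0 ↔ ∃ c : ℝ, ∀ i, Ψ i = c) :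
    (∀ t : ℝ,
      ddρ t - Lw sE tE w (dρ t) *ᵥ (Ldag t *ᵥ dρ t) +
        (1/2 : ℝ) • (Lw sE tE w (ρc t) *ᵥ
          circ sE tE w (Ldag t *ᵥ dρ t) (Ldag t *ᵥ dρ t)) = 0) ↔
    ((∀ t : ℝ, dρ t + -(Lw sE tE w (ρc t) *ᵥ Φ t) = 0) ∧
      ∃ c : ℝ → ℝ, ∀ t : ℝ, ∀ i : Fin n,
        dΦ t i + (1/2 : ℝ) * circ sE tE w (Φ t) (Φ t) i = c t) :=
  geodesic_equation_dual_general sE tE w ρc dρ ddρ Φ dΦ hd1 hd2 hd3 hΦ Ldag hpinv hker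
end

section
/- (Second variation of energy, Claim 3) Let ρ(t) be a smooth curve in the interior of the probability simplex and h(t) a smooth zero-sum perturbation with h(0)=h(1)=0. For g(μ)=L(μ)^†+u₀u₀ᵀ with L linear, d²/dε² g(ρ+εh) = 2 g(ρ+εh)L(h)g(ρ+εh)L(h)g(ρ+εh). Consequently the second variation of the energy E(ρ)=∫₀¹ (1/2)ρ̇ᵀL(ρ)^†ρ̇ dt is δ²E(ρ)(h) = ∫₀¹ (ḣ − L(h)L(ρ)^†ρ̇)ᵀ L(ρ)^† (ḣ − L(h)L(ρ)^†ρ̇) dt, which is nonnegative. -/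
open Matrix

attribute [local instance] Matrix.normedAddCommGroup Matrix.normedSpace

/-!
For fixed `t`, `g(ε) = Gε t ε` inverts the affine family `C + ε B` with `C = L(ρ) + u₀u₀ᵀ` and
`B = L(h)`. The resolvent identity `g(ε) - g(ε') = (ε' - ε) g(ε) B g(ε')` gives `g' = -g B g`,
and the product rule then gives `g'' = 2 g B g B g`. All integrands are jointly continuous in
`(t, ε)`, so the energy may be differentiated twice under the integral sign.

At `ε = 0`, `g(0) = L(ρ)^† + u₀u₀ᵀ` acts as `L(ρ)^†` on zero-sum vectors. The vectors `ρ̇` and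
`ḣ` are zero-sum, and so is every `L(a) x`: expanding `u₀ᵀ (L^† + u₀u₀ᵀ)(L + u₀u₀ᵀ) u₀ = 1`
into nonnegative terms forces `u₀ᵀ L(ρ) u₀ = 0`, hence `D u₀ = 0` (in particular the graph has
no self-loops). The second derivative then completes to the square
`(ḣ − L(h)L^†ρ̇)ᵀ L^† (ḣ − L(h)L^†ρ̇)`, which is nonnegative because `L^†` is positive
semidefinite.
-/

section MatrixCalculus

variable {𝕜 : Type*} [NontriviallyNormedField 𝕜] {l m p : Type*} {x : 𝕜}

theorem hasDerivAt_matrix_iff [Fintype m] {f : 𝕜 → Matrix l m 𝕜} {f' : Matrix l m 𝕜} :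
    HasDerivAt f f' x ↔ ∀ i j, HasDerivAt (fun y => f y i j) (f' i j) x :=
  hasDerivAt_pi.trans (forall_congr' fun _ => hasDerivAt_pi)

theorem HasDerivAt.matrix_mul [Fintype m] [Fintype p] {f : 𝕜 → Matrix l m 𝕜}
    {g : 𝕜 → Matrix m p 𝕜} {f' : Matrix l m 𝕜} {g' : Matrix m p 𝕜} (hf : HasDerivAt f f' x)
    (hg : HasDerivAt g g' x) :
    HasDerivAt (fun y => f y * g y) (f' * g x + f x * g') x := by
  rw [hasDerivAt_matrix_iff] at hf hg ⊢
  intro i j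
  simp only [Matrix.add_apply, Matrix.mul_apply, ← Finset.sum_add_distrib]
  exact HasDerivAt.fun_sum fun k _ => (hf i k).mul (hg k j)

theorem HasDerivAt.matrix_mulVec [Fintype m] {M : 𝕜 → Matrix l m 𝕜} {v : 𝕜 → m → 𝕜}
    {M' : Matrix l m 𝕜} {v' : m → 𝕜} (hM : HasDerivAt M M' x) (hv : HasDerivAt v v' x) :
    HasDerivAt (fun y => M y *ᵥ v y) (M' *ᵥ v x + M x *ᵥ v') x := by
  rw [hasDerivAt_matrix_iff] at hM
  rw [hasDerivAt_pi] at hv ⊢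
  intro i
  simp only [Pi.add_apply, Matrix.mulVec, dotProduct, ← Finset.sum_add_distrib]
  exact HasDerivAt.fun_sum fun k _ => (hM i k).mul (hv k)

theorem HasDerivAt.dotProduct [Fintype m] {u v : 𝕜 → m → 𝕜} {u' v' : m → 𝕜}
    (hu : HasDerivAt u u' x) (hv : HasDerivAt v v' x) :
    HasDerivAt (fun y => u y ⬝ᵥ v y) (u' ⬝ᵥ v x + u x ⬝ᵥ v') x := by
  rw [hasDerivAt_pi] at hu hv
  unfold _root_.dotProduct
  rw [← Finset.sum_add_distrib]
  exact HasDerivAt.fun_sum fun k _ => (hu k).mul (hv k)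

end MatrixCalculus

theorem sum_eq_zero_of_hasDerivAt_of_sum_eq {ι : Type*} [Fintype ι] {f f' : ℝ → ι → ℝ} {c : ℝ}
    (hf : ∀ t, HasDerivAt f (f' t) t) (hc : ∀ t, ∑ i, f t i = c) (t : ℝ) : ∑ i, f' t i = 0 := by
  have hsum := HasDerivAt.fun_sum fun i (_ : i ∈ Finset.univ) => hasDerivAt_pi.mp (hf t) i
  rw [show (fun s => ∑ i, f s i) = fun _ => c from funext hc] at hsum
  exact hsum.unique (hasDerivAt_const t c)

theorem iteratedDeriv_two_eq_of_hasDerivAt {F : Type*} [NormedAddCommGroup F] [NormedSpace ℝ F]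
    {f f' : ℝ → F} {f'' : F} {x : ℝ} (hf : ∀ᶠ y in nhds x, HasDerivAt f (f' y) y)
    (hf' : HasDerivAt f' f'' x) : iteratedDeriv 2 f x = f'' := by
  rw [iteratedDeriv_succ, iteratedDeriv_one,
    Filter.EventuallyEq.deriv_eq (hf.mono fun y hy => hy.deriv), hf'.deriv]

section InverseFamily

variable {m : Type*} [Fintype m] [DecidableEq m] {g : ℝ → Matrix m m ℝ} {C B : Matrix m m ℝ}
  {S : Set ℝ}

theorem sub_eq_smul_mul_mul_of_mul_add_smul_eq_one
    (hg : ∀ ε ∈ S, g ε * (C + ε • B) = 1 ∧ (C + ε • B) * g ε = 1) {ε ε' : ℝ}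
    (hε : ε ∈ S) (hε' : ε' ∈ S) :
    g ε - g ε' = (ε' - ε) • (g ε * B * g ε') :=
  calc g ε - g ε'
      = g ε * ((C + ε' • B) * g ε') - g ε * (C + ε • B) * g ε' := by
        rw [(hg ε' hε').2, (hg ε hε).1, Matrix.mul_one, Matrix.one_mul]
    _ = (ε' - ε) • (g ε * B * g ε') := by
        rw [← Matrix.mul_assoc, ← Matrix.sub_mul, ← Matrix.mul_sub, add_sub_add_left_eq_sub,
          ← sub_smul, Matrix.mul_smul, Matrix.smul_mul]

theorem hasDerivAt_of_mul_add_smul_eq_one_s13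
    (hg : ∀ ε ∈ S, g ε * (C + ε • B) = 1 ∧ (C + ε • B) * g ε = 1) (hS : IsOpen S)
    (hcont : Continuous g) {x : ℝ} (hx : x ∈ S) :
    HasDerivAt g (-(g x * B * g x)) x := by
  refine hasDerivAt_iff_tendsto_slope.mpr ?_
  have hlim : Filter.Tendsto (fun ε => -(g ε * B * g x)) (nhdsWithin x {x}ᶜ)
      (nhds (-(g x * B * g x))) :=
    ((by fun_prop : Continuous fun ε => -(g ε * B * g x)).tendsto x).mono_left
      nhdsWithin_le_nhds
  refine hlim.congr' ?_
  filter_upwards [nhdsWithin_le_nhds (hS.mem_nhds hx), self_mem_nhdsWithin] with ε hε hne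
  have hne' : ε - x ≠ 0 := sub_ne_zero.mpr hne
  rw [slope_def_module, sub_eq_smul_mul_mul_of_mul_add_smul_eq_one hg hε hx, smul_smul,
    ← neg_sub ε x, mul_neg, inv_mul_cancel₀ hne', neg_one_smul]

theorem hasDerivAt_neg_mul_mul_of_mul_add_smul_eq_one
    (hg : ∀ ε ∈ S, g ε * (C + ε • B) = 1 ∧ (C + ε • B) * g ε = 1) (hS : IsOpen S)
    (hcont : Continuous g) {x : ℝ} (hx : x ∈ S) :
    HasDerivAt (fun ε => -(g ε * B * g ε)) ((2 : ℝ) • (g x * B * g x * B * g x)) x := by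
  have hg' := hasDerivAt_of_mul_add_smul_eq_one_s13 hg hS hcont hx
  refine ((hg'.matrix_mul (hasDerivAt_const x B)).matrix_mul hg').neg.congr_deriv ?_
  simp only [Matrix.mul_zero, add_zero, Matrix.neg_mul, Matrix.mul_neg, neg_add, neg_neg,
    two_smul, Matrix.mul_assoc]

theorem iteratedDeriv_two_of_mul_add_smul_eq_one
    (hg : ∀ ε ∈ S, g ε * (C + ε • B) = 1 ∧ (C + ε • B) * g ε = 1) (hS : IsOpen S)
    (hcont : Continuous g) {x : ℝ} (hx : x ∈ S) :
    iteratedDeriv 2 g x = (2 : ℝ) • (g x * B * g x * B * g x) :=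
  iteratedDeriv_two_eq_of_hasDerivAt
    (Filter.eventually_of_mem (hS.mem_nhds hx) fun _ hy =>
      hasDerivAt_of_mul_add_smul_eq_one_s13 hg hS hcont hy)
    (hasDerivAt_neg_mul_mul_of_mul_add_smul_eq_one hg hS hcont hx)

end InverseFamily

section ParametricIntegral

open intervalIntegral

variable {F F' F'' : ℝ → ℝ → ℝ} {a b : ℝ} {S : Set ℝ}

theorem hasDerivAt_intervalIntegral_of_continuous
    (hF : Continuous fun p : ℝ × ℝ => F p.1 p.2) (hF' : Continuous fun p : ℝ × ℝ => F' p.1 p.2)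
    (hS : IsOpen S) (hder : ∀ t ∈ Set.uIcc a b, ∀ x ∈ S, HasDerivAt (F t) (F' t x) x)
    {x₀ : ℝ} (hx₀ : x₀ ∈ S) :
    HasDerivAt (fun x => ∫ t in a..b, F t x) (∫ t in a..b, F' t x₀) x₀ := by
  obtain ⟨r, hr, hball⟩ := Metric.isOpen_iff.mp hS x₀ hx₀
  obtain ⟨C, hC⟩ := (isCompact_uIcc.prod (isCompact_closedBall x₀ (r / 2)))
    |>.exists_bound_of_continuousOn hF'.continuousOn
  have hsub : Metric.ball x₀ (r / 2) ⊆ S :=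
    (Metric.ball_subset_ball (by linarith)).trans hball
  refine (hasDerivAt_integral_of_dominated_loc_of_deriv_le (F := fun x t => F t x)
    (F' := fun x t => F' t x) (μ := MeasureTheory.volume) (bound := fun _ => C)
    (Metric.ball_mem_nhds x₀ (half_pos hr)) ?_ ?_ ?_ ?_ intervalIntegrable_const ?_).2
  · exact Filter.Eventually.of_forall fun x =>
      (by fun_prop : Continuous fun t => F t x).aestronglyMeasurable
  · exact (by fun_prop : Continuous fun t => F t x₀).intervalIntegrable _ _
  · exact (by fun_prop : Continuous fun t => F' t x₀).aestronglyMeasurable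
  · exact Filter.Eventually.of_forall fun t ht x hx =>
      hC (t, x) ⟨Set.uIoc_subset_uIcc ht, Metric.ball_subset_closedBall hx⟩
  · exact Filter.Eventually.of_forall fun t ht x hx =>
      hder t (Set.uIoc_subset_uIcc ht) x (hsub hx)

theorem iteratedDeriv_two_intervalIntegral_of_continuous
    (hF : Continuous fun p : ℝ × ℝ => F p.1 p.2) (hF' : Continuous fun p : ℝ × ℝ => F' p.1 p.2)
    (hF'' : Continuous fun p : ℝ × ℝ => F'' p.1 p.2) (hS : IsOpen S)
    (hder : ∀ t ∈ Set.uIcc a b, ∀ x ∈ S, HasDerivAt (F t) (F' t x) x)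
    (hder' : ∀ t ∈ Set.uIcc a b, ∀ x ∈ S, HasDerivAt (F' t) (F'' t x) x)
    {x₀ : ℝ} (hx₀ : x₀ ∈ S) :
    iteratedDeriv 2 (fun x => ∫ t in a..b, F t x) x₀ = ∫ t in a..b, F'' t x₀ :=
  iteratedDeriv_two_eq_of_hasDerivAt
    (Filter.eventually_of_mem (hS.mem_nhds hx₀) fun _ hx =>
      hasDerivAt_intervalIntegral_of_continuous hF hF' hS hder hx)
    (hasDerivAt_intervalIntegral_of_continuous hF' hF'' hS hder' hx₀)

end ParametricIntegral

section QuadraticForm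

variable {m : Type*} [Fintype m] (a b : m → ℝ) {G : ℝ → Matrix m m ℝ} {G' : Matrix m m ℝ}

theorem hasDerivAt_add_smul (x : ℝ) : HasDerivAt (fun ε : ℝ => a + ε • b) b x := by
  simpa using ((hasDerivAt_id x).smul_const b).const_add a

theorem hasDerivAt_dotProduct_mulVec_add_smul {x : ℝ} (hG : HasDerivAt G G' x) :
    HasDerivAt (fun ε => (a + ε • b) ⬝ᵥ (G ε *ᵥ (a + ε • b)))
      ((a + x • b) ⬝ᵥ (G' *ᵥ (a + x • b)) +
        (b ⬝ᵥ (G x *ᵥ (a + x • b)) + (a + x • b) ⬝ᵥ (G x *ᵥ b))) x := by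
  have hV := hasDerivAt_add_smul a b x
  refine (hV.dotProduct (hG.matrix_mulVec hV)).congr_deriv ?_
  simp only [dotProduct_add]
  ring

theorem hasDerivAt_polar_add_smul {x : ℝ} (hG : HasDerivAt G G' x) :
    HasDerivAt (fun ε => b ⬝ᵥ (G ε *ᵥ (a + ε • b)) + (a + ε • b) ⬝ᵥ (G ε *ᵥ b))
      (b ⬝ᵥ (G' *ᵥ (a + x • b)) + (a + x • b) ⬝ᵥ (G' *ᵥ b) + 2 * (b ⬝ᵥ (G x *ᵥ b))) x := by
  have hV := hasDerivAt_add_smul a b x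
  refine (((hasDerivAt_const x b).dotProduct (hG.matrix_mulVec hV)).add
    (hV.dotProduct (hG.matrix_mulVec (hasDerivAt_const x b)))).congr_deriv ?_
  simp only [zero_dotProduct, dotProduct_add, mulVec_zero, dotProduct_zero]
  ring

end QuadraticForm

theorem iteratedDeriv_two_energy {m : Type*} [Fintype m] [DecidableEq m] {a b : ℝ → m → ℝ}
    (ha : Continuous a) (hb : Continuous b) {G : ℝ → ℝ → Matrix m m ℝ}
    (hG : Continuous fun p : ℝ × ℝ => G p.1 p.2) {C B : ℝ → Matrix m m ℝ} (hB : Continuous B)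
    {t₀ t₁ : ℝ} {S : Set ℝ} (hS : IsOpen S) (h0 : 0 ∈ S)
    (hinv : ∀ t ∈ Set.uIcc t₀ t₁, ∀ ε ∈ S,
      G t ε * (C t + ε • B t) = 1 ∧ (C t + ε • B t) * G t ε = 1) :
    iteratedDeriv 2 (fun ε =>
        ∫ t in t₀..t₁, (1 / 2 : ℝ) * ((a t + ε • b t) ⬝ᵥ (G t ε *ᵥ (a t + ε • b t)))) 0 =
      ∫ t in t₀..t₁, (a t ⬝ᵥ ((G t 0 * B t * G t 0 * B t * G t 0) *ᵥ a t) -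
        (b t ⬝ᵥ ((G t 0 * B t * G t 0) *ᵥ a t) + a t ⬝ᵥ ((G t 0 * B t * G t 0) *ᵥ b t)) +
        b t ⬝ᵥ (G t 0 *ᵥ b t)) := by
  set G₁ : ℝ → ℝ → Matrix m m ℝ := fun t ε => -(G t ε * B t * G t ε)
  set G₂ : ℝ → ℝ → Matrix m m ℝ := fun t ε => (2 : ℝ) • (G t ε * B t * G t ε * B t * G t ε)
  set V : ℝ → ℝ → m → ℝ := fun t ε => a t + ε • b t
  have hder₁ : ∀ t ∈ Set.uIcc t₀ t₁, ∀ ε ∈ S, HasDerivAt (G t) (G₁ t ε) ε :=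
    fun t ht ε hε => hasDerivAt_of_mul_add_smul_eq_one_s13 (hinv t ht) hS (by fun_prop) hε
  have hder₂ : ∀ t ∈ Set.uIcc t₀ t₁, ∀ ε ∈ S, HasDerivAt (G₁ t) (G₂ t ε) ε :=
    fun t ht ε hε => hasDerivAt_neg_mul_mul_of_mul_add_smul_eq_one (hinv t ht) hS (by fun_prop) hε
  rw [iteratedDeriv_two_intervalIntegral_of_continuous
    (F' := fun t ε => (1 / 2 : ℝ) * (V t ε ⬝ᵥ (G₁ t ε *ᵥ V t ε) +
      (b t ⬝ᵥ (G t ε *ᵥ V t ε) + V t ε ⬝ᵥ (G t ε *ᵥ b t))))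
    (F'' := fun t ε => (1 / 2 : ℝ) * (V t ε ⬝ᵥ (G₂ t ε *ᵥ V t ε) +
      (b t ⬝ᵥ (G₁ t ε *ᵥ V t ε) + V t ε ⬝ᵥ (G₁ t ε *ᵥ b t)) +
      (b t ⬝ᵥ (G₁ t ε *ᵥ V t ε) + V t ε ⬝ᵥ (G₁ t ε *ᵥ b t) + 2 * (b t ⬝ᵥ (G t ε *ᵥ b t)))))
    (by fun_prop) (by fun_prop) (by fun_prop) hS
    (fun t ht ε hε =>
      (hasDerivAt_dotProduct_mulVec_add_smul _ _ (hder₁ t ht ε hε)).const_mul _)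
    (fun t ht ε hε => ((hasDerivAt_dotProduct_mulVec_add_smul _ _ (hder₂ t ht ε hε)).add
      (hasDerivAt_polar_add_smul _ _ (hder₁ t ht ε hε))).const_mul _) h0]
  congr 1
  funext t
  simp only [V, G₁, G₂, zero_smul, add_zero, smul_mulVec, neg_mulVec, dotProduct_smul,
    dotProduct_neg, smul_eq_mul]
  ring

theorem IsPInv.dotProduct_mulVec_mulVec_nonneg {n : ℕ} {A B : Matrix (Fin n) (Fin n) ℝ}
    (hAB : IsPInv A B) (x : Fin n → ℝ) : 0 ≤ x ⬝ᵥ (B *ᵥ (A *ᵥ x)) := by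
  have hidem : (B * A)ᵀ * (B * A) = B * A := by
    rw [hAB.2.2.2, ← Matrix.mul_assoc, hAB.2.1]
  rw [mulVec_mulVec, ← hidem, ← mulVec_mulVec, dotProduct_transpose_mulVec]
  simpa using dotProduct_star_self_nonneg ((B * A) *ᵥ x)

namespace Matrix

variable {m : Type*} [Fintype m]

theorem IsSymm.dotProduct_mulVec_comm {A : Matrix m m ℝ} (hA : A.IsSymm) (x y : m → ℝ) :
    x ⬝ᵥ (A *ᵥ y) = (A *ᵥ x) ⬝ᵥ y := by
  conv_lhs => rw [← hA.eq]
  rw [dotProduct_transpose_mulVec, dotProduct_comm]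

theorem add_vecMulVec_mulVec_of_dotProduct_eq_zero (K : Matrix m m ℝ) {u x : m → ℝ}
    (hx : u ⬝ᵥ x = 0) : (K + vecMulVec u u) *ᵥ x = K *ᵥ x := by
  rw [add_mulVec, vecMulVec_mulVec, hx, MulOpposite.op_zero, zero_smul, add_zero]

theorem dotProduct_mulVec_eq_zero_of_add_vecMulVec_mul_eq_one {n : ℕ}
    {K L : Matrix (Fin n) (Fin n) ℝ} {u : Fin n → ℝ} (hK : K.PosSemidef) (hLK : IsPInv L K)
    (hL : 0 ≤ u ⬝ᵥ (L *ᵥ u)) (hu : u ⬝ᵥ u = 1)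
    (h : (K + vecMulVec u u) * (L + vecMulVec u u) = 1) : u ⬝ᵥ (L *ᵥ u) = 0 := by
  have hsum : u ⬝ᵥ (K *ᵥ (L *ᵥ u)) + u ⬝ᵥ (K *ᵥ u) + u ⬝ᵥ (L *ᵥ u) = 0 := by
    have h1 := congrArg (fun M => u ⬝ᵥ (M *ᵥ u)) h
    simp only [one_mulVec, Matrix.add_mul, Matrix.mul_add, add_mulVec, ← mulVec_mulVec,
      vecMulVec_mulVec, op_smul_eq_smul, dotProduct_add, dotProduct_smul, mulVec_smul, hu,
      smul_eq_mul] at h1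
    linarith
  linarith [hLK.dotProduct_mulVec_mulVec_nonneg u, by simpa using hK.dotProduct_mulVec_nonneg u]

theorem completed_square_of_isSymm {K B : Matrix m m ℝ} (hK : K.IsSymm) (hB : B.IsSymm)
    (a b : m → ℝ) :
    a ⬝ᵥ ((K * B * K * B * K) *ᵥ a) - (b ⬝ᵥ ((K * B * K) *ᵥ a) + a ⬝ᵥ ((K * B * K) *ᵥ b)) +
        b ⬝ᵥ (K *ᵥ b) =
      (b - B *ᵥ (K *ᵥ a)) ⬝ᵥ (K *ᵥ (b - B *ᵥ (K *ᵥ a))) := by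
  have hmove : ∀ x y, x ⬝ᵥ (K *ᵥ (B *ᵥ (K *ᵥ y))) = (B *ᵥ (K *ᵥ x)) ⬝ᵥ (K *ᵥ y) :=
    fun x y => by rw [hK.dotProduct_mulVec_comm, hB.dotProduct_mulVec_comm]
  simp only [← mulVec_mulVec, hmove, mulVec_sub, sub_dotProduct, dotProduct_sub]
  ring

theorem completed_square_of_mulVec_eq {G K B : Matrix m m ℝ} (hK : K.IsSymm) (hB : B.IsSymm)
    {u a b : m → ℝ} (hG : ∀ x, u ⬝ᵥ x = 0 → G *ᵥ x = K *ᵥ x) (hBu : ∀ y, u ⬝ᵥ (B *ᵥ y) = 0)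
    (ha : u ⬝ᵥ a = 0) (hb : u ⬝ᵥ b = 0) :
    a ⬝ᵥ ((G * B * G * B * G) *ᵥ a) - (b ⬝ᵥ ((G * B * G) *ᵥ a) + a ⬝ᵥ ((G * B * G) *ᵥ b)) +
        b ⬝ᵥ (G *ᵥ b) =
      (b - B *ᵥ (K *ᵥ a)) ⬝ᵥ (K *ᵥ (b - B *ᵥ (K *ᵥ a))) := by
  rw [← completed_square_of_isSymm hK hB]
  simp only [← mulVec_mulVec, hG _ ha, hG _ hb, hG _ (hBu _)]

end Matrix

theorem posDef_diagonal_edgeWeights {n : ℕ} {E : Type} [DecidableEq E] (sE tE : E → Fin n)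
    {a : Fin n → ℝ} (ha : ∀ i, 0 < a i) :
    (diagonal (fun e => (a (sE e) + a (tE e)) / 2)).PosDef :=
  posDef_diagonal_iff.mpr fun e => by linarith [ha (sE e), ha (tE e)]

section GraphLaplacian

variable {n : ℕ} {E : Type} [Fintype E] [DecidableEq E] (sE tE : E → Fin n) (w : E → ℝ)

theorem Lw_isSymm (a : Fin n → ℝ) : (Lw sE tE w a).IsSymm := by
  simp only [Lw, IsSymm, transpose_mul, transpose_transpose, diagonal_transpose,
    Matrix.mul_assoc]

theorem Lw_add_smul (a b : Fin n → ℝ) (c : ℝ) :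
    Lw sE tE w (a + c • b) = Lw sE tE w a + c • Lw sE tE w b := by
  have hΘ : diagonal (fun e => ((a + c • b) (sE e) + (a + c • b) (tE e)) / 2) =
      diagonal (fun e => (a (sE e) + a (tE e)) / 2) +
        c • diagonal (fun e => (b (sE e) + b (tE e)) / 2) := by
    rw [← diagonal_smul, diagonal_add]
    congr 1
    funext e
    simp only [Pi.add_apply, Pi.smul_apply, smul_eq_mul]
    ring
  simp only [Lw, hΘ, Matrix.mul_add, Matrix.add_mul, Matrix.mul_smul, Matrix.smul_mul]

theorem dotProduct_Lw_mulVec (a x y : Fin n → ℝ) :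
    x ⬝ᵥ (Lw sE tE w a *ᵥ y) = (gradMat sE tE w *ᵥ x) ⬝ᵥ
      (diagonal (fun e => (a (sE e) + a (tE e)) / 2) *ᵥ (gradMat sE tE w *ᵥ y)) := by
  rw [Lw, ← mulVec_mulVec, ← mulVec_mulVec, dotProduct_transpose_mulVec, dotProduct_comm]

theorem onesVec_dotProduct_Lw_mulVec (hD : gradMat sE tE w *ᵥ onesVec n = 0)
    (a x : Fin n → ℝ) : onesVec n ⬝ᵥ (Lw sE tE w a *ᵥ x) = 0 := by
  rw [dotProduct_Lw_mulVec, hD, zero_dotProduct]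

theorem continuous_Lw {a : ℝ → Fin n → ℝ} (ha : Continuous a) :
    Continuous fun t => Lw sE tE w (a t) := by
  unfold Lw
  fun_prop

variable {sE tE w} {a : Fin n → ℝ}

theorem dotProduct_Lw_mulVec_self_nonneg (ha : ∀ i, 0 < a i) (x : Fin n → ℝ) :
    0 ≤ x ⬝ᵥ (Lw sE tE w a *ᵥ x) := by
  rw [dotProduct_Lw_mulVec]
  simpa using (posDef_diagonal_edgeWeights sE tE ha).posSemidef.dotProduct_mulVec_nonneg
    (gradMat sE tE w *ᵥ x)

theorem gradMat_mulVec_eq_zero (ha : ∀ i, 0 < a i) {x : Fin n → ℝ}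
    (hx : x ⬝ᵥ (Lw sE tE w a *ᵥ x) = 0) : gradMat sE tE w *ᵥ x = 0 := by
  by_contra hne
  rw [dotProduct_Lw_mulVec] at hx
  have hpos := (posDef_diagonal_edgeWeights sE tE ha).dotProduct_mulVec_pos hne
  rw [star_trivial, hx] at hpos
  exact lt_irrefl 0 hpos

end GraphLaplacian

theorem onesVec_dotProduct_eq_zero {n : ℕ} {x : Fin n → ℝ} (hx : ∑ i, x i = 0) :
    onesVec n ⬝ᵥ x = 0 := by
  simp only [onesVec, dotProduct, ← Finset.mul_sum, hx, mul_zero]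

theorem onesVec_dotProduct_self {n : ℕ} (hn : 0 < n) : onesVec n ⬝ᵥ onesVec n = 1 := by
  have hsqrt : Real.sqrt n ≠ 0 := by positivity
  simp only [onesVec, dotProduct, Finset.sum_const, Finset.card_univ, Fintype.card_fin,
    nsmul_eq_mul]
  field_simp
  rw [Real.sq_sqrt (Nat.cast_nonneg n)]

theorem gradMat_mulVec_onesVec_eq_zero {n : ℕ} {E : Type} [Fintype E] [DecidableEq E]
    (sE tE : E → Fin n) (w : E → ℝ) {ρ : Fin n → ℝ} (hρ : ∀ i, 0 < ρ i)
    {K : Matrix (Fin n) (Fin n) ℝ} (hK : K.PosSemidef) (hLK : IsPInv (Lw sE tE w ρ) K)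
    (h : (K + vecMulVec (onesVec n) (onesVec n)) *
      (Lw sE tE w ρ + vecMulVec (onesVec n) (onesVec n)) = 1) :
    gradMat sE tE w *ᵥ onesVec n = 0 := by
  rcases n.eq_zero_or_pos with rfl | hn
  · ext e
    simp [mulVec, dotProduct]
  exact gradMat_mulVec_eq_zero hρ <| dotProduct_mulVec_eq_zero_of_add_vecMulVec_mul_eq_one hK hLK
    (dotProduct_Lw_mulVec_self_nonneg hρ _) (onesVec_dotProduct_self hn) h

theorem second_variation_of_energy_general
    {n : ℕ} {E : Type} [Fintype E] [DecidableEq E]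
    (sE tE : E → Fin n) (w : E → ℝ)
    (ρc dρ h dh : ℝ → Fin n → ℝ)
    (hpos : ∀ t i, 0 < ρc t i) (hsum : ∀ t, ∑ i, ρc t i = 1)
    (hd1 : ∀ t, HasDerivAt ρc (dρ t) t) (hd2 : ∀ t, HasDerivAt h (dh t) t)
    (hcdρ : Continuous dρ) (hch : Continuous h)
    (hcdh : Continuous dh)
    (hzero : ∀ t, ∑ i, h t i = 0)
    (Ldag : ℝ → Matrix (Fin n) (Fin n) ℝ)
    (hpinv : ∀ t ∈ Set.Icc (0:ℝ) 1, IsPInv (Lw sE tE w (ρc t)) (Ldag t))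
    (hpsdL : ∀ t ∈ Set.Icc (0:ℝ) 1, (Ldag t).PosSemidef)
    (Gε : ℝ → ℝ → Matrix (Fin n) (Fin n) ℝ) (δ : ℝ) (hδ : 0 < δ)
    (hG : ∀ t ∈ Set.Icc (0:ℝ) 1, ∀ ε : ℝ, |ε| < δ →
      Gε t ε * (Lw sE tE w (fun i => ρc t i + ε * h t i) +
        vecMulVec (onesVec n) (onesVec n)) = 1 ∧
      (Lw sE tE w (fun i => ρc t i + ε * h t i) +
        vecMulVec (onesVec n) (onesVec n)) * Gε t ε = 1)
    (hGcont : Continuous fun p : ℝ × ℝ => Gε p.1 p.2)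
    (hG0 : ∀ t ∈ Set.Icc (0:ℝ) 1, Gε t 0 = Ldag t + vecMulVec (onesVec n) (onesVec n)) :
    (∀ t ∈ Set.Icc (0:ℝ) 1, ∀ ε : ℝ, |ε| < δ →
      iteratedDeriv 2 (Gε t) ε =
        (2 : ℝ) • (Gε t ε * Lw sE tE w (h t) * Gε t ε * Lw sE tE w (h t) * Gε t ε)) ∧
    (iteratedDeriv 2
      (fun ε : ℝ => ∫ t in (0:ℝ)..1,
        (1/2 : ℝ) * ((fun i => dρ t i + ε * dh t i) ⬝ᵥ
          (Gε t ε *ᵥ fun i => dρ t i + ε * dh t i))) 0 =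
      ∫ t in (0:ℝ)..1,
        (dh t - Lw sE tE w (h t) *ᵥ (Ldag t *ᵥ dρ t)) ⬝ᵥ
          (Ldag t *ᵥ (dh t - Lw sE tE w (h t) *ᵥ (Ldag t *ᵥ dρ t)))) ∧
    0 ≤ ∫ t in (0:ℝ)..1,
        (dh t - Lw sE tE w (h t) *ᵥ (Ldag t *ᵥ dρ t)) ⬝ᵥ
          (Ldag t *ᵥ (dh t - Lw sE tE w (h t) *ᵥ (Ldag t *ᵥ dρ t))) := by
  set U := vecMulVec (onesVec n) (onesVec n)
  have hI : Set.uIcc (0 : ℝ) 1 = Set.Icc 0 1 := Set.uIcc_of_le zero_le_one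
  have hinv : ∀ t ∈ Set.uIcc (0 : ℝ) 1, ∀ ε ∈ Set.Ioo (-δ) δ,
      Gε t ε * (Lw sE tE w (ρc t) + U + ε • Lw sE tE w (h t)) = 1 ∧
        (Lw sE tE w (ρc t) + U + ε • Lw sE tE w (h t)) * Gε t ε = 1 := by
    intro t ht ε hε
    rw [add_right_comm, ← Lw_add_smul]
    exact hG t (hI ▸ ht) ε (abs_lt.mpr hε)
  have h0 : (0 : ℝ) ∈ Set.Icc (0 : ℝ) 1 := Set.left_mem_Icc.mpr zero_le_one
  have hD : gradMat sE tE w *ᵥ onesVec n = 0 := by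
    refine gradMat_mulVec_onesVec_eq_zero sE tE w (hpos 0) (hpsdL 0 h0) (hpinv 0 h0) ?_
    simpa [hG0 0 h0] using (hG 0 h0 0 (by simpa using hδ)).1
  refine ⟨fun t ht ε hε => ?_, ?_, ?_⟩
  · exact iteratedDeriv_two_of_mul_add_smul_eq_one (hinv t (hI ▸ ht)) isOpen_Ioo
      (by fun_prop) (abs_lt.mp hε)
  · refine (iteratedDeriv_two_energy hcdρ hcdh hGcont (continuous_Lw sE tE w hch) isOpen_Ioo
      ⟨neg_neg_of_pos hδ, hδ⟩ hinv).trans (intervalIntegral.integral_congr fun t ht => ?_)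
    rw [hI] at ht
    exact completed_square_of_mulVec_eq
      (isHermitian_iff_isSymm.mp (hpsdL t ht).isHermitian) (Lw_isSymm sE tE w (h t))
      (fun x hx => by rw [hG0 t ht, add_vecMulVec_mulVec_of_dotProduct_eq_zero _ hx])
      (onesVec_dotProduct_Lw_mulVec sE tE w hD _)
      (onesVec_dotProduct_eq_zero (sum_eq_zero_of_hasDerivAt_of_sum_eq hd1 hsum t))
      (onesVec_dotProduct_eq_zero (sum_eq_zero_of_hasDerivAt_of_sum_eq hd2 hzero t))
  · exact intervalIntegral.integral_nonneg zero_le_one fun t ht => by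
      simpa only [star_trivial] using (hpsdL t ht).dotProduct_mulVec_nonneg
        (dh t - Lw sE tE w (h t) *ᵥ (Ldag t *ᵥ dρ t))

/-- Claim 3 and second variation of the energy: for
`g(μ) = L(μ)^† + u₀u₀ᵀ` (realized as `Gε t ε`, the inverse of `L(ρ(t)+εh(t))+u₀u₀ᵀ`),
one has `d²/dε² g(ρ+εh) = 2 g L(h) g L(h) g`, and the second variation of the energy
`E(ρ) = ∫₀¹ (1/2) ρ̇ᵀ L(ρ)^† ρ̇ dt` is
`δ²E(ρ)(h) = ∫₀¹ (ḣ − L(h)L(ρ)^†ρ̇)ᵀ L(ρ)^† (ḣ − L(h)L(ρ)^†ρ̇) dt ≥ 0`. -/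
theorem second_variation_of_energy
    {n : ℕ} {E : Type} [Fintype E] [DecidableEq E]
    (sE tE : E → Fin n) (w : E → ℝ)
    (hw : ∀ e, 0 < w e)
    (hconn : ∀ Φ : Fin n → ℝ, (∀ e, Φ (sE e) = Φ (tE e)) → ∀ i j, Φ i = Φ j)
    (ρc dρ h dh : ℝ → Fin n → ℝ)
    (hpos : ∀ t i, 0 < ρc t i) (hsum : ∀ t, ∑ i, ρc t i = 1)
    (hd1 : ∀ t, HasDerivAt ρc (dρ t) t) (hd2 : ∀ t, HasDerivAt h (dh t) t)
    (hcρ : Continuous ρc) (hcdρ : Continuous dρ) (hch : Continuous h)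
    (hcdh : Continuous dh)
    (hzero : ∀ t, ∑ i, h t i = 0) (hb0 : h 0 = 0) (hb1 : h 1 = 0)
    (Ldag : ℝ → Matrix (Fin n) (Fin n) ℝ)
    (hpinv : ∀ t ∈ Set.Icc (0:ℝ) 1, IsPInv (Lw sE tE w (ρc t)) (Ldag t))
    (hpsdL : ∀ t ∈ Set.Icc (0:ℝ) 1, (Ldag t).PosSemidef)
    (Gε : ℝ → ℝ → Matrix (Fin n) (Fin n) ℝ) (δ : ℝ) (hδ : 0 < δ)
    (hG : ∀ t ∈ Set.Icc (0:ℝ) 1, ∀ ε : ℝ, |ε| < δ →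
      Gε t ε * (Lw sE tE w (fun i => ρc t i + ε * h t i) +
        vecMulVec (onesVec n) (onesVec n)) = 1 ∧
      (Lw sE tE w (fun i => ρc t i + ε * h t i) +
        vecMulVec (onesVec n) (onesVec n)) * Gε t ε = 1)
    (hGcont : Continuous fun p : ℝ × ℝ => Gε p.1 p.2)
    (hG0 : ∀ t ∈ Set.Icc (0:ℝ) 1, Gε t 0 = Ldag t + vecMulVec (onesVec n) (onesVec n)) :
    (∀ t ∈ Set.Icc (0:ℝ) 1, ∀ ε : ℝ, |ε| < δ →
      iteratedDeriv 2 (Gε t) ε =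
        (2 : ℝ) • (Gε t ε * Lw sE tE w (h t) * Gε t ε * Lw sE tE w (h t) * Gε t ε)) ∧
    (iteratedDeriv 2
      (fun ε : ℝ => ∫ t in (0:ℝ)..1,
        (1/2 : ℝ) * ((fun i => dρ t i + ε * dh t i) ⬝ᵥ
          (Gε t ε *ᵥ fun i => dρ t i + ε * dh t i))) 0 =
      ∫ t in (0:ℝ)..1,
        (dh t - Lw sE tE w (h t) *ᵥ (Ldag t *ᵥ dρ t)) ⬝ᵥ
          (Ldag t *ᵥ (dh t - Lw sE tE w (h t) *ᵥ (Ldag t *ᵥ dρ t)))) ∧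
    0 ≤ ∫ t in (0:ℝ)..1,
        (dh t - Lw sE tE w (h t) *ᵥ (Ldag t *ᵥ dρ t)) ⬝ᵥ
          (Ldag t *ᵥ (dh t - Lw sE tE w (h t) *ᵥ (Ldag t *ᵥ dρ t))) :=
  second_variation_of_energy_general sE tE w ρc dρ h dh hpos hsum hd1 hd2 hcdρ hch hcdh hzero Ldag
    hpinv hpsdL Gε δ hδ hG hGcont hG0
end

section
/- (Stationary Gibbs measure of Wasserstein Fokker–Planck) Consider the PDE ∂_t P = Π(ρ)^{1/2} ∇_ρ·{Π(ρ)^{-1/2} L(ρ)(P d_ρF(ρ) + β d_ρP)} on a compact subset of the interior of the probability simplex with zero-flux boundary conditions, where Π(ρ) is the product of positive eigenvalues of L(ρ) and β>0. Then P*(ρ) = (1/K) e^{−F(ρ)/β}, with K = ∫ Π(ρ)^{-1/2} e^{−F(ρ)/β} dvol, is a stationary solution: the flux L(ρ)(P* d_ρF + β d_ρP*) vanishes identically. -/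
open Matrix

/-! By the chain rule the Gibbs density satisfies `d_ρP* = −(1/β) P* d_ρF`, so the vector
`P* d_ρF + β d_ρP*` is already zero before the Laplacian `L(ρ)` is applied to it. -/

theorem HasDerivAt.const_mul_exp_neg_div {f : ℝ → ℝ} {f' x : ℝ} (hf : HasDerivAt f f' x)
    (c β : ℝ) :
    HasDerivAt (fun s => c * Real.exp (-f s / β)) (-(1 / β) * (c * Real.exp (-f x / β)) * f') x :=
  (((hf.neg.div_const β).exp).const_mul c).congr_deriv (by rw [Pi.neg_apply]; ring)

theorem gibbs_flux_eq_zero {ι : Type*} {β : ℝ} (hβ : β ≠ 0) (p : ℝ) (g : ι → ℝ) :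
    (fun i => p * g i + β * (-(1 / β) * p * g i)) = 0 := by
  funext i
  rw [Pi.zero_apply, ← mul_assoc, ← mul_assoc, mul_neg, mul_one_div_cancel hβ]
  ring

theorem gibbs_stationary_wasserstein_fokker_planck_general
    {n : ℕ} {E : Type} [Fintype E] [DecidableEq E]
    (sE tE : E → Fin n) (w : E → ℝ)
    (B : Set (Fin n → ℝ))
    (β : ℝ) (hβ : 0 < β)
    (F : (Fin n → ℝ) → ℝ)
    (dF : (Fin n → ℝ) → Fin n → ℝ)
    -- dF is the Euclidean gradient of F
    (hdF : ∀ μ : Fin n → ℝ, ∀ i : Fin n,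
      HasDerivAt (fun s => F (Function.update μ i s)) (dF μ i) (μ i))
    -- the normalizing constant K = ∫_B Π^{-1/2} e^{−F/β} dvol
    (K : ℝ) :
    ∀ μ ∈ B,
      (∀ i : Fin n,
        HasDerivAt (fun s => (1 / K) * Real.exp (-(F (Function.update μ i s)) / β))
          (-(1 / β) * ((1 / K) * Real.exp (-(F μ) / β)) * dF μ i) (μ i)) ∧
      Lw sE tE w μ *ᵥ (fun i =>
        ((1 / K) * Real.exp (-(F μ) / β)) * dF μ i +
          β * (-(1 / β) * ((1 / K) * Real.exp (-(F μ) / β)) * dF μ i)) = 0 := by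
  intro μ _
  refine ⟨fun i => ?_, ?_⟩
  · simpa only [Function.update_eq_self] using (hdF μ i).const_mul_exp_neg_div (1 / K) β
  · rw [gibbs_flux_eq_zero hβ.ne', mulVec_zero]

/-- Stationary Gibbs measure of the Wasserstein Fokker–Planck equation:
the Gibbs density `P*(ρ) = (1/K) e^{−F(ρ)/β}` has Euclidean gradient
`d_ρP* = −(1/β) P* d_ρF`, so the flux `L(ρ)(P* d_ρF + β d_ρP*)` vanishes identically;
hence `P*` is a stationary solution of
`∂_t P = Π^{1/2}∇_ρ·{Π^{-1/2}L(ρ)(P d_ρF + β d_ρP)}`. -/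
theorem gibbs_stationary_wasserstein_fokker_planck
    {n : ℕ} {E : Type} [Fintype E] [DecidableEq E]
    (sE tE : E → Fin n) (w : E → ℝ)
    (hw : ∀ e, 0 < w e)
    (hconn : ∀ Φ : Fin n → ℝ, (∀ e, Φ (sE e) = Φ (tE e)) → ∀ i j, Φ i = Φ j)
    (B : Set (Fin n → ℝ)) (hBcomp : IsCompact B)
    (hBsub : ∀ μ ∈ B, (∀ i, 0 < μ i) ∧ ∑ i, μ i = 1)
    (β : ℝ) (hβ : 0 < β)
    (F : (Fin n → ℝ) → ℝ) (hF : ContDiff ℝ 1 F)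
    (dF : (Fin n → ℝ) → Fin n → ℝ)
    -- dF is the Euclidean gradient of F
    (hdF : ∀ μ : Fin n → ℝ, ∀ i : Fin n,
      HasDerivAt (fun s => F (Function.update μ i s)) (dF μ i) (μ i))
    -- the normalizing constant K = ∫_B Π^{-1/2} e^{−F/β} dvol
    (K : ℝ) (hK : 0 < K) :
    ∀ μ ∈ B,
      (∀ i : Fin n,
        HasDerivAt (fun s => (1 / K) * Real.exp (-(F (Function.update μ i s)) / β))
          (-(1 / β) * ((1 / K) * Real.exp (-(F μ) / β)) * dF μ i) (μ i)) ∧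
      Lw sE tE w μ *ᵥ (fun i =>
        ((1 / K) * Real.exp (-(F μ) / β)) * dF μ i +
          β * (-(1 / β) * ((1 / K) * Real.exp (-(F μ) / β)) * dF μ i)) = 0 :=
  gibbs_stationary_wasserstein_fokker_planck_general sE tE w B β hβ F dF hdF K
end
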